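/- Let D be an integral domain of characteristic not 2 with fraction field K, let n ≥ 4 be even, and let f(x,y) = f₀xⁿ + ⋯ + f_nyⁿ be a binary form of degree n with coefficients in D, with f₀ ≠ 0 and f(x,1) separable over K. Suppose f_n = c² for some c ∈ D. Let I be the D-submodule of L spanned by {c, θ, θ², …, θ^{(n−2)/2}, ζ_{n/2}, ζ_{n/2+1}, …, ζ_{n−1}}. Then: (1) θ·I_f(n−3) equals the D-submodule of L spanned by {c², θ, θ², …, θ^{n−2}, f₀θ^{n−1}}; (2) R_f·I ⊆ I, i.e., I is a fractional ideal of R_f; and (3) I·I ⊆ θ·I_f(n−3). -/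

import Mathlib

open Polynomial

noncomputable def fxOne {n : ℕ} {R : Type*} [CommRing R] (f : Fin (n+1) → R) : R[X] :=
  ∑ i : Fin (n+1), C (f i) * X ^ (n - (i:ℕ))

variable {D : Type*} [CommRing D] [IsDomain D]

/-- The monic polynomial `g(x) = f(x,1)/f₀` over the fraction field `K` of `D`. -/
noncomputable def gPoly {n : ℕ} (f : Fin (n+1) → D) : (FractionRing D)[X] :=
  C ((algebraMap D (FractionRing D) (f 0))⁻¹) * (fxOne f).map (algebraMap D (FractionRing D))

/-- The algebra `L = K[x]/(g(x))`. -/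
noncomputable abbrev LD {n : ℕ} (f : Fin (n+1) → D) : Type _ := AdjoinRoot (gPoly f)

/-- `θ`, the image of `x` in `L`. -/
noncomputable def theta {n : ℕ} (f : Fin (n+1) → D) : LD f := AdjoinRoot.root (gPoly f)

/-- `ζ_k = f₀θ^k + f₁θ^{k-1} + ⋯ + f_{k-1}θ ∈ L`. -/
noncomputable def zeta {n : ℕ} (f : Fin (n+1) → D) (k : ℕ) : LD f :=
  ∑ j ∈ Finset.range k,
    algebraMap D (LD f) (if h : j < n + 1 then f ⟨j, h⟩ else 0) * theta f ^ (k - j)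

/-- The `D`-submodule `R_f` of `L`, with basis `{1, ζ₁, …, ζ_{n−1}}`. -/
noncomputable def Rf {n : ℕ} (f : Fin (n+1) → D) : Submodule D (LD f) :=
  Submodule.span D ({1} ∪ {x : LD f | ∃ k, 1 ≤ k ∧ k ≤ n - 1 ∧ x = zeta f k})

/-- The `D`-submodule `I_f(k)` of `L`, with basis `{1, θ, …, θ^k, ζ_{k+1}, …, ζ_{n−1}}`. -/
noncomputable def If {n : ℕ} (f : Fin (n+1) → D) (k : ℕ) : Submodule D (LD f) :=
  Submodule.span D ({x : LD f | ∃ i ≤ k, x = theta f ^ i} ∪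
    {x : LD f | ∃ j, k + 1 ≤ j ∧ j ≤ n - 1 ∧ x = zeta f j})

/-!
Two identities drive everything: `θ ^ e * ζ_k = ζ_{k+e} - ∑_{s<e} f_{k+s} θ^{e-s}`, and, since `θ`
is a root of `f(x,1)`, `ζ_n = -f_n` and `ζ_k = 0` for `k > n`. Expanding `ζ_i` and swapping a
triangular double sum gives `ζ_i ζ_j = ∑_{t<i} f_t ζ_{i+j-t} - ∑_{s<i} f_{j+s} ζ_{i-s}`, so a
`D`-submodule containing every `ζ_k` is stable under multiplication by the `ζ_k`, and also by
`θ ^ e` as soon as it contains `θ, …, θ ^ e`. Both `I` and `J = span {c², θ, …, θ^{n-2}, f₀θ^{n-1}}`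
contain every `ζ_k` (for `k = n` because `f_n = c²`), and all three claims reduce to generators.
-/

open Finset

lemma Submodule.algebraMap_mul_mem {R A : Type*} [CommSemiring R] [Semiring A] [Algebra R A]
    (M : Submodule R A) (r : R) {x : A} (hx : x ∈ M) : algebraMap R A r * x ∈ M := by
  rw [← Algebra.smul_def]
  exact M.smul_mem r hx

lemma Submodule.span_mul_span_le {R A : Type*} [CommSemiring R] [Semiring A] [Algebra R A]
    {S T : Set A} {M : Submodule R A} (h : ∀ a ∈ S, ∀ b ∈ T, a * b ∈ M) :
    span R S * span R T ≤ M := by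
  rw [span_mul_span, span_le]
  exact Set.mul_subset_iff.mpr h

section CoeffOrZero

variable {R : Type*} [Zero R] {n : ℕ} (f : Fin (n+1) → R)

def coeffOrZero (j : ℕ) : R :=
  if h : j < n + 1 then f ⟨j, h⟩ else 0

lemma coeffOrZero_zero : coeffOrZero f 0 = f 0 := by
  simp [coeffOrZero]

lemma coeffOrZero_self : coeffOrZero f n = f (Fin.last n) := by
  simp [coeffOrZero, Fin.last]

lemma coeffOrZero_of_lt {j : ℕ} (h : n < j) : coeffOrZero f j = 0 :=
  dif_neg (by omega)

end CoeffOrZero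

section Zeta

variable {n : ℕ} (f : Fin (n+1) → D)

lemma zeta_eq_sum (k : ℕ) :
    zeta f k = ∑ j ∈ range k, algebraMap D (LD f) (coeffOrZero f j) * theta f ^ (k - j) :=
  rfl

lemma zeta_zero : zeta f 0 = 0 := by
  simp [zeta_eq_sum]

lemma zeta_add (k e : ℕ) :
    zeta f (k + e) = theta f ^ e * zeta f k +
      ∑ s ∈ range e, algebraMap D (LD f) (coeffOrZero f (k + s)) * theta f ^ (e - s) := by
  rw [zeta_eq_sum, zeta_eq_sum, sum_range_add, mul_sum]
  congr 1
  · refine sum_congr rfl fun j hj => ?_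
    rw [mem_range] at hj
    rw [show k + e - j = k - j + e by omega, pow_add]
    ring
  · refine sum_congr rfl fun s _ => ?_
    rw [show k + e - (k + s) = e - s by omega]

lemma zeta_succ (k : ℕ) :
    zeta f (k + 1) = theta f * zeta f k + algebraMap D (LD f) (coeffOrZero f k) * theta f := by
  simpa using zeta_add f k 1

lemma zeta_succ_eq_leading_add (k : ℕ) :
    zeta f (k + 1) = algebraMap D (LD f) (f 0) * theta f ^ (k + 1) +
      ∑ t ∈ range k, algebraMap D (LD f) (coeffOrZero f (t + 1)) * theta f ^ (k - t) := by
  rw [zeta_eq_sum, sum_range_succ', add_comm, coeffOrZero_zero, Nat.sub_zero]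
  simp only [Nat.add_sub_add_right]

lemma aeval_theta_fxOne (hf0 : f 0 ≠ 0) : aeval (theta f) (fxOne f) = 0 := by
  have hf0K : algebraMap D (FractionRing D) (f 0) ≠ 0 :=
    (map_ne_zero_iff _ (IsFractionRing.injective D (FractionRing D))).mpr hf0
  have hfactor : (fxOne f).map (algebraMap D (FractionRing D)) =
      C (algebraMap D (FractionRing D) (f 0)) * gPoly f := by
    rw [gPoly, ← mul_assoc, ← C_mul, mul_inv_cancel₀ hf0K, C_1, one_mul]
  rw [← aeval_map_algebraMap (FractionRing D), hfactor, map_mul, theta]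
  simp only [AdjoinRoot.aeval_eq, AdjoinRoot.mk_self, mul_zero]

lemma zeta_self (hf0 : f 0 ≠ 0) : zeta f n = -algebraMap D (LD f) (f (Fin.last n)) := by
  have h := aeval_theta_fxOne f hf0
  have hterm : ∀ i : Fin (n+1), aeval (theta f) (C (f i) * X ^ (n - (i : ℕ))) =
      algebraMap D (LD f) (coeffOrZero f i) * theta f ^ (n - (i : ℕ)) := by
    intro i
    rw [map_mul, aeval_C, map_pow, aeval_X, coeffOrZero, dif_pos i.isLt]
  rw [fxOne, map_sum, Fintype.sum_congr _ _ hterm,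
    Fin.sum_univ_eq_sum_range (fun j => algebraMap D (LD f) (coeffOrZero f j) * theta f ^ (n - j)),
    sum_range_succ, ← zeta_eq_sum, Nat.sub_self, pow_zero, mul_one, coeffOrZero_self] at h
  exact eq_neg_of_add_eq_zero_left h

lemma zeta_eq_zero_of_lt (hf0 : f 0 ≠ 0) {k : ℕ} (hk : n < k) : zeta f k = 0 := by
  obtain ⟨e, rfl⟩ : ∃ e, k = n + 1 + e := ⟨k - (n + 1), by omega⟩
  have hnext : zeta f (n + 1) = 0 := by
    rw [zeta_succ, zeta_self f hf0, coeffOrZero_self]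
    ring
  rw [zeta_add, hnext, mul_zero, zero_add]
  exact sum_eq_zero fun s _ => by rw [coeffOrZero_of_lt f (by omega), map_zero, zero_mul]

lemma zeta_mul_zeta (i j : ℕ) :
    zeta f i * zeta f j =
      ∑ t ∈ range i, algebraMap D (LD f) (coeffOrZero f t) * zeta f (j + (i - t)) -
      ∑ s ∈ range i, algebraMap D (LD f) (coeffOrZero f (j + s)) * zeta f (i - s) := by
  have hpow : ∀ e, theta f ^ e * zeta f j = zeta f (j + e) -
      ∑ s ∈ range e, algebraMap D (LD f) (coeffOrZero f (j + s)) * theta f ^ (e - s) :=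
    fun e => eq_sub_of_add_eq (zeta_add f j e).symm
  calc zeta f i * zeta f j
      = ∑ t ∈ range i, algebraMap D (LD f) (coeffOrZero f t) * (theta f ^ (i - t) * zeta f j) := by
        rw [zeta_eq_sum, sum_mul]
        exact sum_congr rfl fun t _ => by ring
    _ = _ := by
        simp_rw [hpow, mul_sub, mul_sum, sum_sub_distrib, zeta_eq_sum, mul_sum]
        congr 1
        rw [sum_comm' (t' := range i) (s' := fun s => range (i - s))
          (fun t s => by simp only [mem_range]; omega)]
        refine sum_congr rfl fun s _ => sum_congr rfl fun t _ => ?_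
        rw [Nat.sub_right_comm]
        ring

end Zeta

section Membership

variable {n : ℕ} {f : Fin (n+1) → D} {M : Submodule D (LD f)}

lemma zeta_succ_sub_mem {k : ℕ} (hpow : ∀ e, 1 ≤ e → e ≤ k → theta f ^ e ∈ M) :
    zeta f (k + 1) - algebraMap D (LD f) (f 0) * theta f ^ (k + 1) ∈ M := by
  rw [zeta_succ_eq_leading_add, add_sub_cancel_left]
  refine sum_mem fun t ht => M.algebraMap_mul_mem _ (hpow _ ?_ ?_) <;>
    · rw [mem_range] at ht
      omega

lemma zeta_succ_mem {k : ℕ} (hpow : ∀ e, 1 ≤ e → e ≤ k → theta f ^ e ∈ M)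
    (hlead : algebraMap D (LD f) (f 0) * theta f ^ (k + 1) ∈ M) : zeta f (k + 1) ∈ M := by
  simpa using add_mem (zeta_succ_sub_mem hpow) hlead

lemma zeta_mem_of_forall_lt (hf0 : f 0 ≠ 0) (hlow : ∀ k < n, zeta f k ∈ M)
    (htop : algebraMap D (LD f) (f (Fin.last n)) ∈ M) (k : ℕ) : zeta f k ∈ M := by
  rcases lt_trichotomy k n with hk | rfl | hk
  · exact hlow k hk
  · rw [zeta_self f hf0]
    exact neg_mem htop
  · rw [zeta_eq_zero_of_lt f hf0 hk]
    exact zero_mem M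

lemma theta_pow_mul_zeta_mem {e : ℕ} (hpow : ∀ e', 1 ≤ e' → e' ≤ e → theta f ^ e' ∈ M)
    (hzeta : ∀ k, zeta f k ∈ M) (k : ℕ) : theta f ^ e * zeta f k ∈ M := by
  rw [eq_sub_of_add_eq (zeta_add f k e).symm]
  refine sub_mem (hzeta _) (sum_mem fun s hs => M.algebraMap_mul_mem _ (hpow _ ?_ ?_)) <;>
    · rw [mem_range] at hs
      omega

lemma zeta_mul_zeta_mem (hzeta : ∀ k, zeta f k ∈ M) (i j : ℕ) : zeta f i * zeta f j ∈ M := by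
  rw [zeta_mul_zeta]
  exact sub_mem (sum_mem fun t _ => M.algebraMap_mul_mem _ (hzeta _))
    (sum_mem fun s _ => M.algebraMap_mul_mem _ (hzeta _))

end Membership

section IdealsOfSquareRoot

variable {n : ℕ} (f : Fin (n+1) → D) (c : D)

noncomputable def Ic : Submodule D (LD f) :=
  Submodule.span D ({algebraMap D (LD f) c} ∪
    {x : LD f | ∃ i, 1 ≤ i ∧ i ≤ (n - 2) / 2 ∧ x = theta f ^ i} ∪
    {x : LD f | ∃ k, n / 2 ≤ k ∧ k ≤ n - 1 ∧ x = zeta f k})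

noncomputable def Jc : Submodule D (LD f) :=
  Submodule.span D ({algebraMap D (LD f) (c ^ 2)} ∪
    {x : LD f | ∃ i, 1 ≤ i ∧ i ≤ n - 2 ∧ x = theta f ^ i} ∪
    {algebraMap D (LD f) (f 0) * theta f ^ (n - 1)})

variable {f c}

lemma algebraMap_mem_Ic : algebraMap D (LD f) c ∈ Ic f c :=
  Submodule.subset_span (Or.inl (Or.inl rfl))

lemma theta_pow_mem_Ic {i : ℕ} (h1 : 1 ≤ i) (h2 : i ≤ (n - 2) / 2) : theta f ^ i ∈ Ic f c :=
  Submodule.subset_span (Or.inl (Or.inr ⟨i, h1, h2, rfl⟩))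

lemma zeta_mem_Ic (hf0 : f 0 ≠ 0) (hc : f (Fin.last n) = c ^ 2) (k : ℕ) : zeta f k ∈ Ic f c := by
  refine zeta_mem_of_forall_lt hf0 (fun k hk => ?_) ?_ k
  · by_cases hbig : n / 2 ≤ k
    · exact Submodule.subset_span (Or.inr ⟨k, hbig, by omega, rfl⟩)
    rcases k with _ | k
    · rw [zeta_zero]
      exact zero_mem _
    exact zeta_succ_mem (fun e h1 h2 => theta_pow_mem_Ic h1 (by omega))
      ((Ic f c).algebraMap_mul_mem _ (theta_pow_mem_Ic (by omega) (by omega)))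
  · rw [hc, pow_two, map_mul]
    exact (Ic f c).algebraMap_mul_mem _ algebraMap_mem_Ic

lemma algebraMap_sq_mem_Jc : algebraMap D (LD f) (c ^ 2) ∈ Jc f c :=
  Submodule.subset_span (Or.inl (Or.inl rfl))

lemma theta_pow_mem_Jc {i : ℕ} (h1 : 1 ≤ i) (h2 : i ≤ n - 2) : theta f ^ i ∈ Jc f c :=
  Submodule.subset_span (Or.inl (Or.inr ⟨i, h1, h2, rfl⟩))

lemma leading_mem_Jc : algebraMap D (LD f) (f 0) * theta f ^ (n - 1) ∈ Jc f c :=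
  Submodule.subset_span (Or.inr rfl)

lemma zeta_mem_Jc (hf0 : f 0 ≠ 0) (hc : f (Fin.last n) = c ^ 2) (k : ℕ) : zeta f k ∈ Jc f c := by
  refine zeta_mem_of_forall_lt hf0 (fun k hk => ?_) (hc ▸ algebraMap_sq_mem_Jc) k
  rcases k with _ | k
  · rw [zeta_zero]
    exact zero_mem _
  refine zeta_succ_mem (fun e h1 h2 => theta_pow_mem_Jc h1 (by omega)) ?_
  by_cases htop : k + 1 = n - 1
  · rw [htop]
    exact leading_mem_Jc
  · exact (Jc f c).algebraMap_mul_mem _ (theta_pow_mem_Jc (by omega) (by omega))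

lemma map_mulLeft_theta_If_eq_Jc (hn : 4 ≤ n) (hf0 : f 0 ≠ 0) (hc : f (Fin.last n) = c ^ 2) :
    (If f (n - 3)).map (LinearMap.mulLeft D (theta f)) = Jc f c := by
  have hpow : ∀ i ≤ n - 3, theta f ^ i ∈ If f (n - 3) := fun i hi =>
    Submodule.subset_span (Or.inl ⟨i, hi, rfl⟩)
  have hzeta : ∀ j, n - 2 ≤ j → j ≤ n - 1 → zeta f j ∈ If f (n - 3) := fun j h1 h2 =>
    Submodule.subset_span (Or.inr ⟨j, by omega, h2, rfl⟩)
  have hmap : ∀ y ∈ If f (n - 3),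
      theta f * y ∈ (If f (n - 3)).map (LinearMap.mulLeft D (theta f)) :=
    fun y hy => Submodule.mem_map_of_mem hy
  apply le_antisymm
  · rw [If, Submodule.map_span, Submodule.span_le]
    rintro _ ⟨y, ⟨i, hi, rfl⟩ | ⟨j, hj1, hj2, rfl⟩, rfl⟩
    · rw [LinearMap.mulLeft_apply, ← pow_succ']
      exact theta_pow_mem_Jc (by omega) (by omega)
    · rw [LinearMap.mulLeft_apply, eq_sub_of_add_eq (zeta_succ f j).symm]
      refine sub_mem (zeta_mem_Jc hf0 hc _) ((Jc f c).algebraMap_mul_mem _ ?_)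
      simpa using theta_pow_mem_Jc (f := f) (c := c) (i := 1) le_rfl (by omega)
  · rw [Jc, Submodule.span_le]
    intro x hx
    rw [SetLike.mem_coe]
    rcases hx with (rfl | ⟨e, he1, he2, rfl⟩) | rfl
    · have hrec := zeta_succ f (n - 1)
      rw [Nat.sub_add_cancel (by omega), zeta_self f hf0, hc] at hrec
      convert hmap (-zeta f (n - 1) - algebraMap D (LD f) (coeffOrZero f (n - 1)) * theta f ^ 0)
        (sub_mem (neg_mem (hzeta _ (by omega) le_rfl))
          ((If f (n - 3)).algebraMap_mul_mem _ (hpow 0 (Nat.zero_le _)))) using 1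
      linear_combination -hrec
    · rw [show e = e - 1 + 1 by omega, pow_succ']
      exact hmap _ (hpow _ (by omega))
    · have hlead := sub_mem (hzeta (n - 3 + 1) (by omega) (by omega))
        (zeta_succ_sub_mem (fun e h1 h2 => hpow e h2))
      rw [sub_sub_cancel, show n - 3 + 1 = n - 2 by omega] at hlead
      convert hmap _ hlead using 1
      rw [show n - 1 = n - 2 + 1 by omega, pow_succ']
      ring

lemma Rf_mul_Ic_le (hf0 : f 0 ≠ 0) (hc : f (Fin.last n) = c ^ 2) : Rf f * Ic f c ≤ Ic f c := by
  refine Submodule.span_mul_span_le ?_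
  rintro _ (rfl | ⟨k, -, -, rfl⟩) x hx
  · rw [one_mul]
    exact Submodule.subset_span hx
  rcases hx with (rfl | ⟨i, hi1, hi2, rfl⟩) | ⟨j, -, -, rfl⟩
  · rw [mul_comm]
    exact (Ic f c).algebraMap_mul_mem _ (zeta_mem_Ic hf0 hc k)
  · rw [mul_comm]
    exact theta_pow_mul_zeta_mem (fun e h1 h2 => theta_pow_mem_Ic h1 (by omega))
      (zeta_mem_Ic hf0 hc) k
  · exact zeta_mul_zeta_mem (zeta_mem_Ic hf0 hc) k j

lemma Ic_mul_Ic_le_Jc (hf0 : f 0 ≠ 0) (hc : f (Fin.last n) = c ^ 2) : Ic f c * Ic f c ≤ Jc f c := by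
  have hzeta := zeta_mem_Jc hf0 hc
  have hpow_zeta : ∀ i, 1 ≤ i → i ≤ (n - 2) / 2 → ∀ k, theta f ^ i * zeta f k ∈ Jc f c :=
    fun i _ hi => theta_pow_mul_zeta_mem (fun e h1 h2 => theta_pow_mem_Jc h1 (by omega)) hzeta
  refine Submodule.span_mul_span_le ?_
  rintro _ ((rfl | ⟨i, hi1, hi2, rfl⟩) | ⟨k, -, -, rfl⟩) _
    ((rfl | ⟨i', hi1', hi2', rfl⟩) | ⟨k', -, -, rfl⟩)
  · rw [← map_mul, ← pow_two]
    exact algebraMap_sq_mem_Jc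
  · exact (Jc f c).algebraMap_mul_mem _ (theta_pow_mem_Jc hi1' (by omega))
  · exact (Jc f c).algebraMap_mul_mem _ (hzeta k')
  · rw [mul_comm]
    exact (Jc f c).algebraMap_mul_mem _ (theta_pow_mem_Jc hi1 (by omega))
  · rw [← pow_add]
    exact theta_pow_mem_Jc (by omega) (by omega)
  · exact hpow_zeta i hi1 hi2 k'
  · rw [mul_comm]
    exact (Jc f c).algebraMap_mul_mem _ (hzeta k)
  · rw [mul_comm]
    exact hpow_zeta i' hi1' hi2' k
  · exact zeta_mul_zeta_mem hzeta k k'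

end IdealsOfSquareRoot

theorem stmt13_general (n : ℕ) (hn : 4 ≤ n)
    (f : Fin (n+1) → D) (hf0 : f 0 ≠ 0)
    (c : D) (hc : f (Fin.last n) = c ^ 2) :
    letI I : Submodule D (LD f) :=
      Submodule.span D ({algebraMap D (LD f) c} ∪
        {x : LD f | ∃ i, 1 ≤ i ∧ i ≤ (n - 2) / 2 ∧ x = theta f ^ i} ∪
        {x : LD f | ∃ k, n / 2 ≤ k ∧ k ≤ n - 1 ∧ x = zeta f k})
    (Submodule.map (LinearMap.mulLeft D (theta f)) (If f (n - 3)) =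
      Submodule.span D ({algebraMap D (LD f) (c ^ 2)} ∪
        {x : LD f | ∃ i, 1 ≤ i ∧ i ≤ n - 2 ∧ x = theta f ^ i} ∪
        {algebraMap D (LD f) (f 0) * theta f ^ (n - 1)})) ∧
    (∀ r ∈ Rf f, ∀ x ∈ I, r * x ∈ I) ∧
    (I * I ≤ Submodule.map (LinearMap.mulLeft D (theta f)) (If f (n - 3))) := by
  have hmap := map_mulLeft_theta_If_eq_Jc hn hf0 hc
  refine ⟨hmap, fun r hr x hx => Rf_mul_Ic_le hf0 hc (Submodule.mul_mem_mul hr hx), ?_⟩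
  exact hmap ▸ Ic_mul_Ic_le_Jc hf0 hc

theorem stmt13 (hchar : ringChar D ≠ 2) (n : ℕ) (hn : 4 ≤ n) (hneven : Even n)
    (f : Fin (n+1) → D) (hf0 : f 0 ≠ 0)
    (hsep : ((fxOne f).map (algebraMap D (FractionRing D))).Separable)
    (c : D) (hc : f (Fin.last n) = c ^ 2) :
    letI I : Submodule D (LD f) :=
      Submodule.span D ({algebraMap D (LD f) c} ∪
        {x : LD f | ∃ i, 1 ≤ i ∧ i ≤ (n - 2) / 2 ∧ x = theta f ^ i} ∪
        {x : LD f | ∃ k, n / 2 ≤ k ∧ k ≤ n - 1 ∧ x = zeta f k})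
    (Submodule.map (LinearMap.mulLeft D (theta f)) (If f (n - 3)) =
      Submodule.span D ({algebraMap D (LD f) (c ^ 2)} ∪
        {x : LD f | ∃ i, 1 ≤ i ∧ i ≤ n - 2 ∧ x = theta f ^ i} ∪
        {algebraMap D (LD f) (f 0) * theta f ^ (n - 1)})) ∧
    (∀ r ∈ Rf f, ∀ x ∈ I, r * x ∈ I) ∧
    (I * I ≤ Submodule.map (LinearMap.mulLeft D (theta f)) (If f (n - 3))) :=
  stmt13_general n hn f hf0 c hc
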